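/- Let A be a primitive axial algebra of Jordan type η over a field F with char F ≠ 2, let ℬ be a basis of A consisting of η-axes, and let (·,·) be the bilinear form on A determined by (b, c) = φ_b(c) for all b, c ∈ ℬ. Then: (1) (a, u) = φ_a(u) for every η-axis a ∈ A and every u ∈ A; (2) (a, a) = 1 for every η-axis a ∈ A; (3) (u^ψ, v^ψ) = (u, v) for every algebra automorphism ψ of A and all u, v ∈ A. -/

import Mathlib

universe u v

section Prelim

variable (F : Type u) {A : Type v} [Field F] [NonUnitalNonAssocCommRing A]
  [Module F A] [SMulCommClass F A A] [IsScalarTower F A A]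

/-- The λ-eigenspace of the adjoint map `ad_a : x ↦ a * x`. -/
def eigSp (a : A) (l : F) : Submodule F A where
  carrier := {x | a * x = l • x}
  add_mem' := by
    intro x y hx hy
    simp only [Set.mem_setOf_eq] at *
    rw [mul_add, hx, hy, smul_add]
  zero_mem' := by simp
  smul_mem' := by
    intro c x hx
    simp only [Set.mem_setOf_eq] at *
    rw [mul_smul_comm, hx, smul_smul, smul_smul, mul_comm]

/-- `a` is a (primitive) `η`-axis. -/
structure IsAxis (η : F) (a : A) : Prop where
  ne_zero : a ≠ 0
  idem : a * a = a
  decomp : eigSp F a 1 ⊔ eigSp F a 0 ⊔ eigSp F a η = ⊤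
  prim : eigSp F a 1 = Submodule.span F {a}
  f11 : ∀ x ∈ eigSp F a 1, ∀ y ∈ eigSp F a 1, x * y ∈ eigSp F a 1
  f00 : ∀ x ∈ eigSp F a 0, ∀ y ∈ eigSp F a 0, x * y ∈ eigSp F a 0
  f10 : ∀ x ∈ eigSp F a 1, ∀ y ∈ eigSp F a 0, x * y = 0
  fpe : ∀ x ∈ eigSp F a 1 ⊔ eigSp F a 0, ∀ y ∈ eigSp F a η, x * y ∈ eigSp F a η
  fee : ∀ x ∈ eigSp F a η, ∀ y ∈ eigSp F a η, x * y ∈ eigSp F a 1 ⊔ eigSp F a 0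

/-- `τ` is the Miyamoto involution of the `η`-axis `a`. -/
structure IsMiyamoto (η : F) (a : A) (τ : A → A) : Prop where
  fixes : ∀ x ∈ eigSp F a 1 ⊔ eigSp F a 0, τ x = x
  negates : ∀ x ∈ eigSp F a η, τ x = -x
  map_add : ∀ x y : A, τ (x + y) = τ x + τ y
  map_smul : ∀ (c : F) (x : A), τ (c • x) = c • τ x
  map_mul : ∀ x y : A, τ (x * y) = τ x * τ y
  bijective : Function.Bijective τ

/-- `c = φ_a(u)`, the projection of `u` to `F·a` w.r.t. the axis `a`. -/
def IsProjCoeff (η : F) (a u : A) (c : F) : Prop :=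
  ∃ u0 ∈ eigSp F a 0, ∃ ue ∈ eigSp F a η, u = c • a + u0 + ue

/-- `e` is an identity element of the subalgebra `N`. -/
def IsIdentOf (N : NonUnitalSubalgebra F A) (e : A) : Prop :=
  e ∈ N ∧ ∀ z ∈ N, e * z = z

/-- `ψ` is an `F`-algebra automorphism of `A`. -/
structure IsAlgAut (ψ : A → A) : Prop where
  map_add : ∀ x y : A, ψ (x + y) = ψ x + ψ y
  map_smul : ∀ (c : F) (x : A), ψ (c • x) = c • ψ x
  map_mul : ∀ x y : A, ψ (x * y) = ψ x * ψ y
  bijective : Function.Bijective ψ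

/-- The graph `Δ_𝒜`: distinct axes are adjacent iff their product is nonzero. -/
def axesGraph (𝒜 : Set A) : SimpleGraph 𝒜 where
  Adj x y := x ≠ y ∧ (x : A) * (y : A) ≠ 0
  symm := by
    constructor
    rintro x y ⟨hxy, hm⟩
    exact ⟨hxy.symm, by rwa [mul_comm]⟩
  loopless := by constructor; rintro x ⟨h, -⟩; exact h rfl

/-- Multiplication of the Jordan algebra of Clifford type `J(V,B) = F·e ⊕ V`. -/
def cliffMul {V : Type*} [AddCommGroup V] [Module F V]
    (B : V →ₗ[F] V →ₗ[F] F) (x y : F × V) : F × V :=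
  (x.1 * y.1 + B x.2 y.2, x.1 • y.2 + y.1 • x.2)

end Prelim

/-- An isomorphism of `A` with a Jordan algebra of Clifford type `J(V,B)`. -/
structure CliffordTypeIso (F : Type u) (A : Type v) [Field F]
    [NonUnitalNonAssocCommRing A] [Module F A] [SMulCommClass F A A]
    [IsScalarTower F A A] where
  V : Type v
  [instAdd : AddCommGroup V]
  [instMod : Module F V]
  B : V →ₗ[F] V →ₗ[F] F
  symm : ∀ v w : V, B v w = B w v
  iso : A ≃ₗ[F] F × V
  mul_compat : ∀ x y : A, iso (x * y) = cliffMul F B (iso x) (iso y)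
/-! The coefficient functional `φ_a` is linear and kills `A_0(a) ⊕ A_η(a)`. Applying `φ_a` to
`b² = b` and to `b(ab) - η ab = (1 - η) φ_b(a) b`, where `b = φ_a(b) a + p + q`, gives
`(1 - η) φ_a(b)² = (1 - η) φ_b(a) φ_a(b)`; by symmetry `(φ_a(b) - φ_b(a))² = 0`. Hence
`φ_a(b) = φ_b(a)` for any two axes, so the form agreeing with `φ` on the basis agrees with
`u ↦ φ_a(u)` in its first slot at every axis `a`. Automorphisms map axes to axes and preserve
`φ`, which gives the invariance on the basis. -/

section ProjCoeff

variable {F : Type u} {A : Type v} [Field F] [NonUnitalNonAssocCommRing A]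
  [Module F A] [SMulCommClass F A A] {η : F} {a u v : A} {c d : F}

theorem mem_eigSp_iff {x : A} {l : F} : x ∈ eigSp F a l ↔ a * x = l • x := Iff.rfl

namespace IsProjCoeff

theorem mul_mul_sub_smul (haa : a * a = a) (h : IsProjCoeff F η a u c) :
    a * (a * u) - η • (a * u) = ((1 - η) * c) • a := by
  obtain ⟨u₀, hu₀, uη, huη, rfl⟩ := h
  have hau : a * (c • a + u₀ + uη) = c • a + η • uη := by
    rw [mul_add, mul_add, mul_smul_comm, haa, mem_eigSp_iff.mp hu₀, mem_eigSp_iff.mp huη,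
      zero_smul, add_zero]
  rw [hau, mul_add, mul_smul_comm, haa, mul_smul_comm, mem_eigSp_iff.mp huη]
  module

theorem unique (hη1 : η ≠ 1) (ha0 : a ≠ 0) (haa : a * a = a) (h : IsProjCoeff F η a u c)
    (h' : IsProjCoeff F η a u d) : c = d :=
  mul_left_cancel₀ (sub_ne_zero.mpr hη1.symm) <|
    smul_left_injective F ha0 <| (h.mul_mul_sub_smul haa).symm.trans (h'.mul_mul_sub_smul haa)

theorem add (h : IsProjCoeff F η a u c) (h' : IsProjCoeff F η a v d) :
    IsProjCoeff F η a (u + v) (c + d) := by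
  obtain ⟨u₀, hu₀, uη, huη, rfl⟩ := h
  obtain ⟨v₀, hv₀, vη, hvη, rfl⟩ := h'
  exact ⟨u₀ + v₀, add_mem hu₀ hv₀, uη + vη, add_mem huη hvη, by module⟩

theorem smul (h : IsProjCoeff F η a u c) (r : F) : IsProjCoeff F η a (r • u) (r * c) := by
  obtain ⟨u₀, hu₀, uη, huη, rfl⟩ := h
  exact ⟨r • u₀, Submodule.smul_mem _ r hu₀, r • uη, Submodule.smul_mem _ r huη, by module⟩

end IsProjCoeff

theorem isProjCoeff_self : IsProjCoeff F η a a 1 :=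
  ⟨0, zero_mem _, 0, zero_mem _, by simp⟩

theorem isProjCoeff_of_mem_zero {x : A} (hx : x ∈ eigSp F a 0) : IsProjCoeff F η a x 0 :=
  ⟨x, hx, 0, zero_mem _, by simp⟩

theorem isProjCoeff_of_mem_eta {x : A} (hx : x ∈ eigSp F a η) : IsProjCoeff F η a x 0 :=
  ⟨0, zero_mem _, x, hx, by simp⟩

end ProjCoeff

section ProjCoeffFun

variable {F : Type u} {A : Type v} [Field F] [NonUnitalNonAssocCommRing A]
  [Module F A] [SMulCommClass F A A] {η : F}

def IsProjCoeffFun (η : F) (φ : A → A → F) : Prop :=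
  ∀ a : A, IsAxis F η a → ∀ u : A, IsProjCoeff F η a u (φ a u)

variable {φ : A → A → F} {a b u : A}

theorem IsProjCoeffFun.apply_eq (hη1 : η ≠ 1) (hφ : IsProjCoeffFun η φ) (ha : IsAxis F η a)
    {c : F} (h : IsProjCoeff F η a u c) : φ a u = c :=
  (hφ a ha u).unique hη1 ha.ne_zero ha.idem h

theorem IsProjCoeffFun.apply_self (hη1 : η ≠ 1) (hφ : IsProjCoeffFun η φ)
    (ha : IsAxis F η a) : φ a a = 1 :=
  hφ.apply_eq hη1 ha isProjCoeff_self

def IsProjCoeffFun.toLinearMap (hη1 : η ≠ 1) (hφ : IsProjCoeffFun η φ) (ha : IsAxis F η a) :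
    A →ₗ[F] F where
  toFun := φ a
  map_add' u v := hφ.apply_eq hη1 ha ((hφ a ha u).add (hφ a ha v))
  map_smul' r u := hφ.apply_eq hη1 ha ((hφ a ha u).smul r)

@[simp]
theorem IsProjCoeffFun.toLinearMap_apply (hη1 : η ≠ 1) (hφ : IsProjCoeffFun η φ)
    (ha : IsAxis F η a) (u : A) : hφ.toLinearMap hη1 ha u = φ a u :=
  rfl

theorem IsProjCoeffFun.mul_self_eq (hη1 : η ≠ 1) (hφ : IsProjCoeffFun η φ)
    (ha : IsAxis F η a) (hb : IsAxis F η b) : φ a b * φ a b = φ b a * φ a b := by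
  set ℓ := hφ.toLinearMap hη1 ha
  set σ := φ a b
  obtain ⟨p, hp, q, hq, hb_eq⟩ := hφ a ha b
  have hap : a * p = 0 := by simpa using mem_eigSp_iff.mp hp
  have haq : a * q = η • q := mem_eigSp_iff.mp hq
  have hpq : p * q ∈ eigSp F a η := ha.fpe p (Submodule.mem_sup_right hp) q hq
  have ℓ_zero {x : A} (hx : x ∈ eigSp F a 0) : ℓ x = 0 :=
    hφ.apply_eq hη1 ha (isProjCoeff_of_mem_zero hx)
  have ℓ_eta {x : A} (hx : x ∈ eigSp F a η) : ℓ x = 0 :=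
    hφ.apply_eq hη1 ha (isProjCoeff_of_mem_eta hx)
  have ℓ_a : ℓ a = 1 := hφ.apply_self hη1 ha
  have hab : a * b = σ • a + η • q := by
    rw [hb_eq, mul_add, mul_add, mul_smul_comm, ha.idem, hap, haq, add_zero]
  have hbp : b * p = p * p + p * q := by
    rw [hb_eq, add_mul, add_mul, mul_comm (σ • a), mul_smul_comm, mul_comm p a, hap, smul_zero,
      zero_add, mul_comm q p]
  have hbq : b * q = (σ * η) • q + p * q + q * q := by
    rw [hb_eq, add_mul, add_mul, mul_comm (σ • a), mul_smul_comm, mul_comm q a, haq, smul_smul]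
  have ℓ_ab : ℓ (a * b) = σ := by
    rw [hab, map_add, map_smul, map_smul, ℓ_a, ℓ_eta hq, smul_eq_mul, smul_zero, mul_one, add_zero]
  have ℓ_bp : ℓ (b * p) = 0 := by
    rw [hbp, map_add, ℓ_zero (ha.f00 p hp p hp), ℓ_eta hpq, add_zero]
  have ℓ_bq : ℓ (b * q) = ℓ (q * q) := by
    rw [hbq, map_add, map_add, map_smul, ℓ_eta hq, ℓ_eta hpq, smul_zero, zero_add, zero_add]
  have hb_sq : σ * σ + ℓ (q * q) = σ := by
    have h : b * b = σ • (a * b) + b * p + b * q := by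
      calc b * b = b * (σ • a + p + q) := by rw [← hb_eq]
        _ = _ := by rw [mul_add, mul_add, mul_smul_comm, mul_comm b a]
    have := congrArg ℓ h
    rw [hb.idem, map_add, map_add, map_smul, ℓ_ab, ℓ_bp, ℓ_bq, smul_eq_mul, add_zero] at this
    exact this.symm
  have hb_ab : σ * σ + η * ℓ (q * q) - η * σ = (1 - η) * φ b a * σ := by
    have h := (hφ b hb a).mul_mul_sub_smul hb.idem
    have hbab : b * (a * b) = σ • (a * b) + η • (b * q) := by
      rw [hab, mul_add, mul_smul_comm, mul_smul_comm, mul_comm b a, hab]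
    rw [mul_comm b a, hbab] at h
    have := congrArg ℓ h
    rwa [map_sub, map_add, map_smul, map_smul, map_smul, map_smul, ℓ_ab, ℓ_bq, smul_eq_mul,
      smul_eq_mul, smul_eq_mul, smul_eq_mul] at this
  refine mul_left_cancel₀ (sub_ne_zero.mpr hη1.symm) ?_
  linear_combination hb_ab - η * hb_sq

theorem IsProjCoeffFun.symm (hη1 : η ≠ 1) (hφ : IsProjCoeffFun η φ) (ha : IsAxis F η a)
    (hb : IsAxis F η b) : φ a b = φ b a := by
  have hab := hφ.mul_self_eq hη1 ha hb
  have hba := hφ.mul_self_eq hη1 hb ha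
  exact sub_eq_zero.mp <| mul_self_eq_zero.mp <| by linear_combination hab + hba

theorem IsProjCoeffFun.eq_of_eq_on_basis {ι : Type*} (hη1 : η ≠ 1) (hφ : IsProjCoeffFun η φ)
    (bB : Module.Basis ι F A) (hax : ∀ i, IsAxis F η (bB i)) {Φ : A →ₗ[F] A →ₗ[F] F}
    (hΦ : ∀ i j, Φ (bB i) (bB j) = φ (bB i) (bB j)) (ha : IsAxis F η a) (u : A) :
    Φ a u = φ a u := by
  have h_flip (j : ι) : Φ.flip (bB j) = hφ.toLinearMap hη1 (hax j) :=
    bB.ext fun i => by simp [hΦ, hφ.symm hη1 (hax i) (hax j)]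
  have h_row : Φ a = hφ.toLinearMap hη1 ha :=
    bB.ext fun j => by
      simpa [hφ.symm hη1 (hax j) ha] using LinearMap.congr_fun (h_flip j) a
  exact LinearMap.congr_fun h_row u

end ProjCoeffFun

section Automorphism

variable {F : Type u} {A : Type v} [Field F] [NonUnitalNonAssocCommRing A]
  [Module F A] {ψ : A → A}

namespace IsAlgAut

noncomputable def toLinearEquiv (hψ : IsAlgAut F ψ) : A ≃ₗ[F] A :=
  LinearEquiv.ofBijective ⟨⟨ψ, hψ.map_add⟩, hψ.map_smul⟩ hψ.bijective

@[simp]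
theorem toLinearEquiv_apply (hψ : IsAlgAut F ψ) (x : A) : hψ.toLinearEquiv x = ψ x :=
  rfl

theorem mul_mem_map (hψ : IsAlgAut F ψ) {S T U : Submodule F A}
    (h : ∀ x ∈ S, ∀ y ∈ T, x * y ∈ U) :
    ∀ x ∈ S.map (hψ.toLinearEquiv : A →ₗ[F] A), ∀ y ∈ T.map (hψ.toLinearEquiv : A →ₗ[F] A),
      x * y ∈ U.map (hψ.toLinearEquiv : A →ₗ[F] A) := by
  rintro _ ⟨x, hx, rfl⟩ _ ⟨y, hy, rfl⟩
  exact ⟨x * y, h x hx y hy, hψ.map_mul x y⟩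

variable [SMulCommClass F A A]

theorem eigSp_map (hψ : IsAlgAut F ψ) (a : A) (l : F) :
    eigSp F (ψ a) l = (eigSp F a l).map (hψ.toLinearEquiv : A →ₗ[F] A) := by
  ext x
  obtain ⟨y, rfl⟩ := hψ.toLinearEquiv.surjective x
  rw [Submodule.mem_map_equiv, LinearEquiv.symm_apply_apply, mem_eigSp_iff, mem_eigSp_iff,
    toLinearEquiv_apply, ← hψ.map_mul, ← hψ.map_smul, hψ.bijective.1.eq_iff]

end IsAlgAut

variable [SMulCommClass F A A] {η : F} {a u : A}

theorem IsAxis.map (ha : IsAxis F η a) (hψ : IsAlgAut F ψ) : IsAxis F η (ψ a) := by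
  have hψ0 : ψ 0 = 0 := map_zero hψ.toLinearEquiv
  have hbot : (⊥ : Submodule F A).map (hψ.toLinearEquiv : A →ₗ[F] A) = ⊥ := Submodule.map_bot _
  have htop : (⊤ : Submodule F A).map (hψ.toLinearEquiv : A →ₗ[F] A) = ⊤ := by simp
  refine ⟨fun h => ha.ne_zero (hψ.bijective.1 (h.trans hψ0.symm)), by rw [← hψ.map_mul, ha.idem],
    ?decomp, ?prim, ?f11, ?f00, ?f10, ?fpe, ?fee⟩
  all_goals simp only [hψ.eigSp_map, ← Submodule.map_sup]
  case decomp => rw [ha.decomp, htop]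
  case prim => rw [ha.prim, Submodule.map_span, Set.image_singleton]; rfl
  case f11 => exact hψ.mul_mem_map ha.f11
  case f00 => exact hψ.mul_mem_map ha.f00
  case f10 =>
    intro x hx y hy
    have h := hψ.mul_mem_map (U := ⊥)
      (fun x hx y hy => (Submodule.mem_bot F).2 (ha.f10 x hx y hy)) x hx y hy
    rwa [hbot, Submodule.mem_bot] at h
  case fpe => exact hψ.mul_mem_map ha.fpe
  case fee => exact hψ.mul_mem_map ha.fee

theorem IsProjCoeff.map {c : F} (h : IsProjCoeff F η a u c) (hψ : IsAlgAut F ψ) :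
    IsProjCoeff F η (ψ a) (ψ u) c := by
  obtain ⟨u₀, hu₀, uη, huη, rfl⟩ := h
  refine ⟨ψ u₀, ?_, ψ uη, ?_, by rw [hψ.map_add, hψ.map_add, hψ.map_smul]⟩ <;>
    rw [hψ.eigSp_map] <;> exact Submodule.mem_map_of_mem ‹_›

end Automorphism

theorem frobenius_form_properties_general
    {F : Type u} {A : Type v} {ι : Type v} [Field F] [NonUnitalNonAssocCommRing A]
    [Module F A] [SMulCommClass F A A]
    (η : F) (hη1 : η ≠ 1)
    (bB : Module.Basis ι F A) (hax : ∀ i : ι, IsAxis F η (bB i))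
    (φ : A → A → F)
    (hφ : ∀ a : A, IsAxis F η a → ∀ u : A, IsProjCoeff F η a u (φ a u))
    (Φ : A →ₗ[F] A →ₗ[F] F)
    (hΦ : ∀ i j : ι, Φ (bB i) (bB j) = φ (bB i) (bB j)) :
    (∀ a : A, IsAxis F η a → ∀ u : A, Φ a u = φ a u) ∧
    (∀ a : A, IsAxis F η a → Φ a a = 1) ∧
    (∀ ψ : A → A, IsAlgAut F ψ → ∀ u v : A, Φ (ψ u) (ψ v) = Φ u v) := by
  have h_axis (a : A) (ha : IsAxis F η a) (u : A) : Φ a u = φ a u :=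
    IsProjCoeffFun.eq_of_eq_on_basis hη1 hφ bB hax hΦ ha u
  refine ⟨h_axis, fun a ha => (h_axis a ha a).trans (IsProjCoeffFun.apply_self hη1 hφ ha),
    fun ψ hψ u v => ?_⟩
  have h_inv : Φ.compl₁₂ (hψ.toLinearEquiv : A →ₗ[F] A) hψ.toLinearEquiv = Φ :=
    LinearMap.ext_basis bB bB fun i j => by
      have hψi := (hax i).map hψ
      simp only [LinearMap.compl₁₂_apply, LinearEquiv.coe_coe, IsAlgAut.toLinearEquiv_apply]
      rw [h_axis _ hψi, IsProjCoeffFun.apply_eq hη1 hφ hψi ((hφ _ (hax i) _).map hψ), hΦ]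
  exact LinearMap.congr_fun₂ h_inv u v

/-- Let `ℬ` be a basis of `A` consisting of `η`-axes and let
`(·,·)` be the bilinear form determined by `(b, c) = φ_b(c)` for `b, c ∈ ℬ`.
Then (1) `(a, u) = φ_a(u)` for every `η`-axis `a` and every `u ∈ A`;
(2) `(a, a) = 1` for every `η`-axis `a`; (3) the form is invariant under all
algebra automorphisms of `A`. -/
theorem frobenius_form_properties
    {F : Type u} {A : Type v} {ι : Type v} [Field F] [NonUnitalNonAssocCommRing A]
    [Module F A] [SMulCommClass F A A] [IsScalarTower F A A]
    (hchar : (2 : F) ≠ 0) (η : F) (hη0 : η ≠ 0) (hη1 : η ≠ 1)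
    (𝒜 : Set A) (h𝒜 : ∀ a ∈ 𝒜, IsAxis F η a)
    (hgen : NonUnitalAlgebra.adjoin F 𝒜 = ⊤)
    (bB : Module.Basis ι F A) (hax : ∀ i : ι, IsAxis F η (bB i))
    (φ : A → A → F)
    (hφ : ∀ a : A, IsAxis F η a → ∀ u : A, IsProjCoeff F η a u (φ a u))
    (Φ : A →ₗ[F] A →ₗ[F] F)
    (hΦ : ∀ i j : ι, Φ (bB i) (bB j) = φ (bB i) (bB j)) :
    (∀ a : A, IsAxis F η a → ∀ u : A, Φ a u = φ a u) ∧
    (∀ a : A, IsAxis F η a → Φ a a = 1) ∧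
    (∀ ψ : A → A, IsAlgAut F ψ → ∀ u v : A, Φ (ψ u) (ψ v) = Φ u v) :=
  frobenius_form_properties_general η hη1 bB hax φ hφ Φ hΦ
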